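/- The complex Jacobian determinant of the map G : ℂ^n → ℂ^n given by G(w) = (w₁·w_{k+1}⋯w_n, …, w_k·w_{k+1}⋯w_n, w_{k+1}⋯w_n, w_{k+2}⋯w_n, …, w_{n−1}w_n, w_n) equals w_{k+1}^k · w_{k+2}^{k+1} ⋯ w_n^{n−1}. -/

import Mathlib

/-!
Every coordinate of `G` is a product of distinct coordinates of `w`, `G i = ∏ s ∈ S i, w s`,
and the least element of `S i` is `i` itself. Hence the Jacobian matrix is upper triangular
with diagonal entries `∏ s ∈ S i \ {i}, w s`. With 0-based indices, `S i \ {i}` consists of the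
`s ≥ k` with `s > i`, so `w j` occurs in exactly `j` diagonal entries if `j ≥ k` and in none
otherwise.
-/

/-- G(w) = (w₁·w_{k+1}⋯w_n, …, w_k·w_{k+1}⋯w_n, w_{k+1}⋯w_n, …, w_{n-1}w_n, w_n)
(0-based indices). -/
noncomputable def hartogsG (n k : ℕ) (w : Fin n → ℂ) : Fin n → ℂ := fun i =>
  (if (i : ℕ) < k then w i else 1) *
    ∏ s : Fin n, (if max (i : ℕ) k ≤ (s : ℕ) then w s else 1)

open Finset

section MonomialMap

variable {ι : Type*}

def monomialMap {M : Type*} [CommMonoid M] (S : ι → Finset ι) (w : ι → M) : ι → M :=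
  fun i => ∏ s ∈ S i, w s

def monomialJacobian {R : Type*} [CommMonoidWithZero R] [DecidableEq ι] (S : ι → Finset ι)
    (w : ι → R) : Matrix ι ι R :=
  Matrix.of fun i j => if j ∈ S i then ∏ t ∈ (S i).erase j, w t else 0

theorem monomialJacobian_isUpperTriangular {R : Type*} [CommMonoidWithZero R] [DecidableEq ι]
    [LinearOrder ι] {S : ι → Finset ι} (hle : ∀ i, ∀ s ∈ S i, i ≤ s) (w : ι → R) :
    (monomialJacobian S w).IsUpperTriangular := fun i j hji =>
  if_neg fun hj => (hle i j hj).not_gt hji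

variable {𝕜 : Type*} [NontriviallyNormedField 𝕜] [Fintype ι] [DecidableEq ι]

theorem hasFDerivAt_monomialMap (S : ι → Finset ι) (w : ι → 𝕜) :
    HasFDerivAt (monomialMap S)
      (ContinuousLinearMap.pi fun i => ∑ s ∈ S i,
        (∏ t ∈ (S i).erase s, w t) • (ContinuousLinearMap.proj s : (ι → 𝕜) →L[𝕜] 𝕜)) w :=
  hasFDerivAt_pi.2 fun _ => hasFDerivAt_finsetProd

theorem toMatrix'_fderiv_monomialMap (S : ι → Finset ι) (w : ι → 𝕜) :
    LinearMap.toMatrix' (fderiv 𝕜 (monomialMap S) w).toLinearMap = monomialJacobian S w := by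
  ext i j
  simp [(hasFDerivAt_monomialMap S w).fderiv, monomialJacobian, Pi.single_apply]

theorem det_fderiv_monomialMap [LinearOrder ι] {S : ι → Finset ι} (hmem : ∀ i, i ∈ S i)
    (hle : ∀ i, ∀ s ∈ S i, i ≤ s) (w : ι → 𝕜) :
    LinearMap.det (fderiv 𝕜 (monomialMap S) w).toLinearMap =
      ∏ i, ∏ s ∈ (S i).erase i, w s := by
  rw [← LinearMap.det_toMatrix', toMatrix'_fderiv_monomialMap,
    Matrix.det_of_isUpperTriangular (monomialJacobian_isUpperTriangular hle w)]
  simp [monomialJacobian, hmem]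

end MonomialMap

section HartogsSupport

variable {n k : ℕ}

def hartogsSupport (n k : ℕ) (i : Fin n) : Finset (Fin n) :=
  if (i : ℕ) < k then insert i ({s | k ≤ (s : ℕ)} : Finset (Fin n))
  else ({s | (i : ℕ) ≤ s} : Finset (Fin n))

theorem hartogsG_eq_monomialMap (n k : ℕ) :
    hartogsG n k = monomialMap (hartogsSupport n k) := by
  ext w i
  rw [hartogsG, monomialMap, hartogsSupport]
  split_ifs with hik
  · rw [prod_insert (by simp; omega), prod_filter, max_eq_right hik.le]
  · rw [one_mul, prod_filter, max_eq_left (not_lt.1 hik)]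

theorem mem_hartogsSupport {i s : Fin n} :
    s ∈ hartogsSupport n k i ↔ if (i : ℕ) < k then s = i ∨ k ≤ (s : ℕ) else (i : ℕ) ≤ s := by
  unfold hartogsSupport
  split_ifs <;> simp

theorem mem_hartogsSupport_self (i : Fin n) : i ∈ hartogsSupport n k i := by
  rw [mem_hartogsSupport]
  split_ifs <;> simp

theorem le_of_mem_hartogsSupport {i s : Fin n} (hs : s ∈ hartogsSupport n k i) : i ≤ s := by
  rw [mem_hartogsSupport] at hs
  rw [Fin.le_def]
  split_ifs at hs
  · rcases hs with rfl | hs <;> omega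
  · exact hs

theorem mem_erase_hartogsSupport {i s : Fin n} :
    s ∈ (hartogsSupport n k i).erase i ↔ k ≤ (s : ℕ) ∧ i < s := by
  rw [mem_erase, mem_hartogsSupport, Fin.lt_def, Ne, Fin.ext_iff]
  split_ifs <;> omega

end HartogsSupport

theorem hartogsG_jacobian_det_general (n k : ℕ) (w : Fin n → ℂ) :
    LinearMap.det (fderiv ℂ (hartogsG n k) w).toLinearMap =
      ∏ j : Fin n, (if k ≤ (j : ℕ) then w j ^ (j : ℕ) else 1) := by
  rw [hartogsG_eq_monomialMap,
    det_fderiv_monomialMap mem_hartogsSupport_self (fun _ _ => le_of_mem_hartogsSupport) w]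
  calc ∏ i, ∏ s ∈ (hartogsSupport n k i).erase i, w s
      = ∏ s ∈ {s : Fin n | k ≤ (s : ℕ)}, ∏ _i ∈ Iio s, w s :=
        prod_comm' fun i s => by simp only [mem_erase_hartogsSupport]; simp [and_comm]
    _ = ∏ j : Fin n, (if k ≤ (j : ℕ) then w j ^ (j : ℕ) else 1) := by
        simp [prod_filter, Fin.card_Iio]

/-- The complex Jacobian determinant of G equals w_{k+1}^k · w_{k+2}^{k+1} ⋯ w_n^{n-1}
(0-based: ∏_{j≥k} w_j^j). -/
theorem hartogsG_jacobian_det (n k : ℕ) (hk : 1 ≤ k) (hkn : k < n) (w : Fin n → ℂ) :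
    LinearMap.det (fderiv ℂ (hartogsG n k) w).toLinearMap =
      ∏ j : Fin n, (if k ≤ (j : ℕ) then w j ^ (j : ℕ) else 1) :=
  hartogsG_jacobian_det_general n k w
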